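/- The number of norm-4 vectors in the Niemeier lattice A_12² is C(13,4)·C(4,2) + C(13,4)·C(4,2) + 4·C(13,2)² + 2·13·C(13,5) + 2·C(13,2)·C(13,3) + 2·C(13,2)·C(13,3) + 2·13·C(13,5) = 189072. -/

import Mathlib

/-- The standard inner product on `ℚ^26`. -/
def qip (x y : Fin 26 → ℚ) : ℚ := ∑ i, x i * y i

/-- A rational vector with all coordinates integral. -/
def isIntVec (x : Fin 26 → ℚ) : Prop := ∀ i, ∃ m : ℤ, x i = (m : ℚ)

/-- First copy of the root lattice `A_12` (coordinates `0,…,12`). -/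
def A12a : Set (Fin 26 → ℚ) :=
  {x | isIntVec x ∧ (∑ i, x i) = 0 ∧ ∀ i : Fin 26, 13 ≤ i.val → x i = 0}

/-- Second copy of the root lattice `A_12` (coordinates `13,…,25`). -/
def A12b : Set (Fin 26 → ℚ) :=
  {x | isIntVec x ∧ (∑ i, x i) = 0 ∧ ∀ i : Fin 26, i.val < 13 → x i = 0}

/-- The glue vector `g = ((1/13^12, -12/13), (5/13^8, -8/13^5))`. -/
def glueA12 : Fin 26 → ℚ := fun i =>
  if i.val < 12 then 1 / 13 else if i.val = 12 then -(12 / 13)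
  else if i.val < 21 then 5 / 13 else -(8 / 13)

/-- The Niemeier lattice `A_12²`. -/
def NiemeierA12sq : AddSubgroup (Fin 26 → ℚ) :=
  AddSubgroup.closure (A12a ∪ A12b ∪ {glueA12})

open Finset

/-!
A vector of `A₁₂²` is `(f + k/13, g + 5k/13)` with `f, g ∈ ℤ¹³`, `∑ f = -k`, `∑ g = -5k`; the
glue class `k` is unique modulo 13 and the norm is `|f|² + |g|² - 2k²`. Since `x (x + 1) ≥ 0` on
`ℤ`, an integer vector with prescribed sum has least norm exactly when it takes two consecutive
values, and the minimisers are counted by a binomial coefficient. Comparing these minima with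
`4 + 2k²` shows that only the classes `k ≡ ±1, ±2, ±3, ±5` contain norm-4 vectors, all minimal
in both blocks. In class 0 the two blocks are vectors of `A₁₂` of norms `(0,4)`, `(2,2)` or
`(4,0)`, whose entries lie in `{-1, 0, 1}`.
-/

lemma Int.abs_le_self_sq (x : ℤ) : |x| ≤ x ^ 2 := Int.natCast_natAbs x ▸ Int.natAbs_le_self_sq x

def sumSqFiber (ι : Type*) [Fintype ι] (s m : ℤ) : Set (ι → ℤ) :=
  {f | ∑ i, f i = s ∧ ∑ i, f i ^ 2 = m}

def signVec {ι : Type*} [DecidableEq ι] (x : Σ _ : Finset ι, Finset ι) (i : ι) : ℤ :=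
  if i ∈ x.2 then 1 else if i ∈ x.1 then -1 else 0

lemma abs_signVec_le_one {ι : Type*} [DecidableEq ι] (x : Σ _ : Finset ι, Finset ι) (i : ι) :
    |signVec x i| ≤ 1 := by
  simp only [signVec]; split_ifs <;> simp

section IntegerVectors

variable {ι : Type*} [Fintype ι]

lemma finite_setOf_sum_sq_le (m : ℤ) : {f : ι → ℤ | ∑ i, f i ^ 2 ≤ m}.Finite := by
  refine (Set.Finite.pi (t := fun _ => Set.Icc (-m) m) fun _ => Set.finite_Icc _ _).subset ?_
  intro f hm i _
  have hi : f i ^ 2 ≤ m :=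
    (single_le_sum (fun j _ => sq_nonneg (f j)) (mem_univ i)).trans hm
  exact abs_le.mp ((Int.abs_le_self_sq _).trans hi)

lemma sumSqFiber_finite (s m : ℤ) : (sumSqFiber ι s m).Finite :=
  (finite_setOf_sum_sq_le m).subset fun _ hf => hf.2.le

lemma sum_sub_mul_sub_add_one (f : ι → ℤ) (a : ℤ) :
    ∑ i, (f i - a) * (f i - a + 1)
      = ∑ i, f i ^ 2 - (2 * a - 1) * ∑ i, f i + Fintype.card ι * (a * (a - 1)) := by
  simp only [show ∀ i, (f i - a) * (f i - a + 1) = f i ^ 2 - (2 * a - 1) * f i + a * (a - 1)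
    from fun i => by ring, sum_add_distrib, sum_sub_distrib, ← mul_sum, sum_const, card_univ,
    nsmul_eq_mul]
  ring

lemma Int.mul_add_one_nonneg (x : ℤ) : 0 ≤ x * (x + 1) := by
  rcases le_or_gt 0 x with h | h <;> nlinarith

lemma min_le_sum_sq (f : ι → ℤ) (a : ℤ) (t : ℕ) (hf : ∑ i, f i = Fintype.card ι * a - t) :
    Fintype.card ι * a ^ 2 - 2 * a * t + t ≤ ∑ i, f i ^ 2 := by
  have h := sum_nonneg fun i (_ : i ∈ univ) => Int.mul_add_one_nonneg (f i - a)
  rw [sum_sub_mul_sub_add_one, hf] at h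
  linarith

lemma eq_or_eq_sub_one_of_sum_sq_eq_min (f : ι → ℤ) (a : ℤ) (t : ℕ)
    (hf : ∑ i, f i = Fintype.card ι * a - t)
    (hq : ∑ i, f i ^ 2 = Fintype.card ι * a ^ 2 - 2 * a * t + t) (i : ι) :
    f i = a ∨ f i = a - 1 := by
  have h : ∑ i, (f i - a) * (f i - a + 1) = 0 := by
    rw [sum_sub_mul_sub_add_one, hf, hq]; ring
  have hi := (sum_eq_zero_iff_of_nonneg fun j _ => Int.mul_add_one_nonneg (f j - a)).mp h i
    (mem_univ i)
  rcases mul_eq_zero.mp hi with h | h <;> omega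

lemma ncard_sumSqFiber_min (a : ℤ) (t : ℕ) {s m : ℤ} (hs : s = Fintype.card ι * a - t)
    (hm : m = Fintype.card ι * a ^ 2 - 2 * a * t + t) :
    (sumSqFiber ι s m).ncard = (Fintype.card ι).choose t := by
  classical
  set v : Finset ι → ι → ℤ := fun P i => if i ∈ P then a - 1 else a
  have hv_sum (P : Finset ι) : ∑ i, v P i = Fintype.card ι * a - #P := by
    simp only [v, show ∀ i, (if i ∈ P then a - 1 else a) = a - if i ∈ P then 1 else 0
      from fun i => by split_ifs <;> ring, sum_sub_distrib, sum_boole]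
    simp
  have hv_sq (P : Finset ι) : ∑ i, v P i ^ 2 = Fintype.card ι * a ^ 2 - 2 * a * #P + #P := by
    simp only [v, show ∀ i, (if i ∈ P then a - 1 else a) ^ 2
        = a ^ 2 - (2 * a - 1) * if i ∈ P then 1 else 0 from fun i => by split_ifs <;> ring,
      sum_sub_distrib, ← mul_sum, sum_boole]
    simp; ring
  have hv_filter (P : Finset ι) : ({i | v P i = a - 1} : Finset ι) = P := by
    ext i
    by_cases hi : i ∈ P <;> simp [v, hi, eq_sub_iff_add_eq]
  have hv_inj : Function.Injective v := fun P Q h => by rw [← hv_filter P, ← hv_filter Q, h]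
  have himage : sumSqFiber ι s m = v '' ↑(powersetCard t (univ : Finset ι)) := by
    ext f
    simp only [Set.mem_image, mem_coe, mem_powersetCard, subset_univ, true_and]
    constructor
    · rintro ⟨hfs, hfm⟩
      have hf : v {i | f i = a - 1} = f := funext fun i => by
        rcases eq_or_eq_sub_one_of_sum_sq_eq_min f a t (hs ▸ hfs) (hm ▸ hfm) i with h | h <;>
          simp [v, h, eq_sub_iff_add_eq]
      refine ⟨_, ?_, hf⟩
      have := hv_sum {i | f i = a - 1}
      rw [hf, hfs, hs] at this
      omega
    · rintro ⟨P, hP, rfl⟩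
      exact ⟨by rw [hv_sum, hP, hs], by rw [hv_sq, hP, hm]⟩
  rw [himage, Set.ncard_image_of_injective _ hv_inj, Set.ncard_coe_finset, card_powersetCard,
    card_univ]

/-- The least `∑ i, f i ^ 2` over `f : Fin n → ℤ` with `∑ i, f i = -s`, attained when `s % n`
entries equal `-(s / n) - 1` and the others `-(s / n)`. -/
def sumSqMin (n s : ℕ) : ℕ :=
  n * (s / n) ^ 2 + 2 * (s / n) * (s % n) + s % n

lemma sumSqMin_le_sum_sq (f : ι → ℤ) {s : ℕ} (hf : ∑ i, f i = -s) :
    (sumSqMin (Fintype.card ι) s : ℤ) ≤ ∑ i, f i ^ 2 := by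
  have hs := Nat.div_add_mod s (Fintype.card ι)
  unfold sumSqMin
  set q := s / Fintype.card ι
  set r := s % Fintype.card ι
  have h := min_le_sum_sq f (-q) r (by rw [hf, ← hs]; push_cast; ring)
  push_cast
  linarith

lemma ncard_sumSqFiber_sumSqMin (s : ℕ) :
    (sumSqFiber ι (-s) (sumSqMin (Fintype.card ι) s)).ncard =
      (Fintype.card ι).choose (s % Fintype.card ι) := by
  have hs := Nat.div_add_mod s (Fintype.card ι)
  unfold sumSqMin
  set q := s / Fintype.card ι
  set r := s % Fintype.card ι
  exact ncard_sumSqFiber_min (-q) r (by rw [← hs]; push_cast; ring) (by push_cast; ring)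

lemma even_sum_sq_sub_sum (f : ι → ℤ) : Even (∑ i, f i ^ 2 - ∑ i, f i) := by
  rw [← sum_sub_distrib]
  exact even_sum _ fun i _ => by simpa [sq, mul_sub_one] using Int.even_mul_pred_self (f i)

lemma abs_le_one_of_sum_eq_zero_of_sum_sq_le_four (f : ι → ℤ) (hs : ∑ i, f i = 0)
    (hm : ∑ i, f i ^ 2 ≤ 4) (i : ι) : |f i| ≤ 1 := by
  classical
  rw [← add_sum_erase _ _ (mem_univ i)] at hs hm
  have h : |∑ j ∈ univ.erase i, f j| ≤ ∑ j ∈ univ.erase i, f j ^ 2 :=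
    (abs_sum_le_sum_abs _ _).trans (sum_le_sum fun j _ => Int.abs_le_self_sq _)
  rw [show ∑ j ∈ univ.erase i, f j = -f i by linarith, abs_neg] at h
  nlinarith [sq_abs (f i)]

lemma sq_eq_ite_ne_zero {x : ℤ} (hx : |x| ≤ 1) : x ^ 2 = if x ≠ 0 then 1 else 0 := by
  rcases abs_le.mp hx with ⟨h1, h2⟩
  interval_cases x <;> rfl

lemma eq_ite_eq_one_sub_ite_ne_zero {x : ℤ} (hx : |x| ≤ 1) :
    x = 2 * (if x = 1 then 1 else 0) - if x ≠ 0 then 1 else 0 := by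
  rcases abs_le.mp hx with ⟨h1, h2⟩
  interval_cases x <;> rfl

def signPattern (v : ι → ℤ) : Σ _ : Finset ι, Finset ι :=
  ⟨univ.filter (v · ≠ 0), univ.filter (v · = 1)⟩

lemma sum_sq_eq_card_of_abs_le_one {v : ι → ℤ} (hv : ∀ i, |v i| ≤ 1) :
    ∑ i, v i ^ 2 = #(signPattern v).1 := by
  rw [sum_congr rfl fun i _ => sq_eq_ite_ne_zero (hv i), sum_boole]
  rfl

lemma sum_eq_of_abs_le_one {v : ι → ℤ} (hv : ∀ i, |v i| ≤ 1) :
    ∑ i, v i = 2 * #(signPattern v).2 - #(signPattern v).1 := by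
  rw [sum_congr rfl fun i _ => eq_ite_eq_one_sub_ite_ne_zero (hv i), sum_sub_distrib,
    ← mul_sum, sum_boole, sum_boole]
  rfl

variable (ι) in
def balancedSignPatterns (c : ℕ) : Finset (Σ _ : Finset ι, Finset ι) :=
  (powersetCard (2 * c) univ).sigma fun T => powersetCard c T

variable [DecidableEq ι]

lemma signPattern_signVec {x : Σ _ : Finset ι, Finset ι} (hx : x.2 ⊆ x.1) :
    signPattern (signVec x) = x := by
  refine Sigma.ext ?_ (heq_of_eq ?_) <;> ext i <;>
    simp only [signPattern, mem_filter, mem_univ, true_and] <;> unfold signVec <;>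
    split_ifs <;> simp_all [@hx i]

lemma signVec_signPattern {v : ι → ℤ} (hv : ∀ i, |v i| ≤ 1) : signVec (signPattern v) = v := by
  funext i
  rcases abs_le.mp (hv i) with ⟨h1, h2⟩
  simp only [signVec, signPattern, mem_filter, mem_univ, true_and]
  split_ifs <;> omega

lemma sumSqFiber_zero_eq_image {c : ℕ} (hc : c ≤ 2) :
    sumSqFiber ι 0 (2 * c) = signVec '' ↑(balancedSignPatterns ι c) := by
  ext v
  simp only [balancedSignPatterns, Set.mem_image, mem_coe, mem_sigma, mem_powersetCard,
    subset_univ, true_and]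
  constructor
  · rintro ⟨hs, hm⟩
    have hv := abs_le_one_of_sum_eq_zero_of_sum_sq_le_four v hs (by rw [hm]; omega)
    have h₁ := sum_sq_eq_card_of_abs_le_one hv
    have h₂ := sum_eq_of_abs_le_one hv
    refine ⟨signPattern v, ⟨by omega, fun i => ?_, by omega⟩, signVec_signPattern hv⟩
    simp only [signPattern, mem_filter, mem_univ, true_and]
    omega
  · rintro ⟨x, ⟨hT, hPT, hP⟩, rfl⟩
    have hx := signPattern_signVec hPT
    have h₁ := sum_sq_eq_card_of_abs_le_one (abs_signVec_le_one x)
    have h₂ := sum_eq_of_abs_le_one (abs_signVec_le_one x)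
    rw [hx, hT] at h₁
    rw [hx, hT, hP] at h₂
    exact ⟨by rw [h₂]; push_cast; ring, by rw [h₁]; push_cast; ring⟩

lemma ncard_sumSqFiber_zero {c : ℕ} (hc : c ≤ 2) {m : ℤ} (hm : m = 2 * c) :
    (sumSqFiber ι 0 m).ncard = (Fintype.card ι).choose (2 * c) * (2 * c).choose c := by
  have hinj : Set.InjOn signVec (balancedSignPatterns ι c : Set (Σ _ : Finset ι, Finset ι)) :=
    fun x hx y hy h => by
      rw [← signPattern_signVec (mem_powersetCard.mp (mem_sigma.mp hx).2).1,
        ← signPattern_signVec (mem_powersetCard.mp (mem_sigma.mp hy).2).1, h]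
  rw [hm, sumSqFiber_zero_eq_image hc, hinj.ncard_image, Set.ncard_coe_finset,
    balancedSignPatterns, card_sigma,
    sum_congr rfl fun T hT => by rw [card_powersetCard, (mem_powersetCard.mp hT).2], sum_const,
    card_powersetCard, card_univ, smul_eq_mul]

end IntegerVectors

lemma fin26_funext {α : Type*} {x y : Fin 26 → α}
    (h₁ : ∀ i : Fin 13, x (Fin.castAdd 13 i) = y (Fin.castAdd 13 i))
    (h₂ : ∀ i : Fin 13, x (Fin.natAdd 13 i) = y (Fin.natAdd 13 i)) : x = y :=
  funext fun i => Fin.addCases (m := 13) (n := 13) h₁ h₂ i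

lemma sum_fin26 (x : Fin 26 → ℚ) :
    ∑ i, x i = ∑ i : Fin 13, x (Fin.castAdd 13 i) + ∑ i : Fin 13, x (Fin.natAdd 13 i) :=
  Fin.sum_univ_add (a := 13) (b := 13) x

def liftA12 : ℤ × (Fin 13 → ℤ) × (Fin 13 → ℤ) →+ (Fin 26 → ℚ) where
  toFun p := Fin.append (fun i => (p.2.1 i : ℚ) + p.1 / 13) (fun i => (p.2.2 i : ℚ) + 5 * p.1 / 13)
  map_zero' := fin26_funext (fun i => by simp [Fin.append_left]) (fun i => by
    simp only [Fin.append_right]; simp)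
  map_add' p q := fin26_funext
    (fun i => by
      simp only [Fin.append_left, Pi.add_apply, Prod.fst_add, Prod.snd_add]; push_cast; ring)
    (fun i => by
      simp only [Fin.append_right, Pi.add_apply, Prod.fst_add, Prod.snd_add]; push_cast; ring)

@[simp]
lemma liftA12_castAdd (p : ℤ × (Fin 13 → ℤ) × (Fin 13 → ℤ)) (i : Fin 13) :
    liftA12 p (Fin.castAdd 13 i) = p.2.1 i + p.1 / 13 :=
  Fin.append_left (fun i => (p.2.1 i : ℚ) + p.1 / 13) (fun i => (p.2.2 i : ℚ) + 5 * p.1 / 13) i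

lemma liftA12_natAdd (p : ℤ × (Fin 13 → ℤ) × (Fin 13 → ℤ)) (i : Fin 13) :
    liftA12 p (Fin.natAdd 13 i) = p.2.2 i + 5 * p.1 / 13 :=
  Fin.append_right (fun i => (p.2.1 i : ℚ) + p.1 / 13) (fun i => (p.2.2 i : ℚ) + 5 * p.1 / 13) i

def A12sqCoords : AddSubgroup (ℤ × (Fin 13 → ℤ) × (Fin 13 → ℤ)) where
  carrier := {p | ∑ i, p.2.1 i = -p.1 ∧ ∑ i, p.2.2 i = -(5 * p.1)}
  add_mem' := by
    rintro ⟨k, f, g⟩ ⟨k', f', g'⟩ ⟨hf, hg⟩ ⟨hf', hg'⟩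
    exact ⟨by simp [sum_add_distrib, hf, hf']; ring, by simp [sum_add_distrib, hg, hg']; ring⟩
  zero_mem' := by simp
  neg_mem' := by
    rintro ⟨k, f, g⟩ ⟨hf, hg⟩
    exact ⟨by simp [hf], by simp [hg]⟩

lemma mem_A12sqCoords_map_of_isIntVec {x : Fin 26 → ℚ} (hx : isIntVec x)
    (h₁ : ∑ i : Fin 13, x (Fin.castAdd 13 i) = 0) (h₂ : ∑ i : Fin 13, x (Fin.natAdd 13 i) = 0) :
    x ∈ A12sqCoords.map liftA12 := by
  choose m hm using hx
  refine ⟨(0, fun i => m (Fin.castAdd 13 i), fun i => m (Fin.natAdd 13 i)), ⟨?_, ?_⟩,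
    fin26_funext (fun i => by simp [hm]) (fun i => by simp only [liftA12_natAdd]; simp [hm])⟩
  · simp only [hm] at h₁; exact_mod_cast h₁
  · simp only [hm] at h₂; exact_mod_cast h₂

lemma liftA12_mem_A12a {f : Fin 13 → ℤ} (hf : ∑ i, f i = 0) : liftA12 (0, f, 0) ∈ A12a := by
  refine ⟨fun i => ?_, ?_, fun i hi => ?_⟩
  · exact Fin.addCases (m := 13) (n := 13) (fun j => ⟨f j, by simp⟩)
      (fun j => ⟨0, by simp only [liftA12_natAdd]; simp⟩) i
  · simp only [sum_fin26, liftA12_castAdd, liftA12_natAdd]; simp; exact_mod_cast hf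
  · induction i using Fin.addCases (m := 13) (n := 13) with
    | left j => exact absurd hi (by simp)
    | right j => simp only [liftA12_natAdd]; simp

lemma liftA12_mem_A12b {g : Fin 13 → ℤ} (hg : ∑ i, g i = 0) : liftA12 (0, 0, g) ∈ A12b := by
  refine ⟨fun i => ?_, ?_, fun i hi => ?_⟩
  · exact Fin.addCases (m := 13) (n := 13) (fun j => ⟨0, by simp⟩)
      (fun j => ⟨g j, by simp only [liftA12_natAdd]; simp⟩) i
  · simp only [sum_fin26, liftA12_castAdd, liftA12_natAdd]; simp; exact_mod_cast hg
  · induction i using Fin.addCases (m := 13) (n := 13) with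
    | left j => simp
    | right j => exact absurd hi (by simp)

def glueA12Coords : ℤ × (Fin 13 → ℤ) × (Fin 13 → ℤ) :=
  (1, ![0, 0, 0, 0, 0, 0, 0, 0, 0, 0, 0, 0, -1], ![0, 0, 0, 0, 0, 0, 0, 0, -1, -1, -1, -1, -1])

lemma glueA12Coords_mem : glueA12Coords ∈ A12sqCoords := ⟨by decide, by decide⟩

lemma liftA12_glueA12Coords : liftA12 glueA12Coords = glueA12 :=
  fin26_funext (fun i => by rw [liftA12_castAdd]; fin_cases i <;> norm_num [glueA12Coords, glueA12])
    (fun i => by rw [liftA12_natAdd]; fin_cases i <;> norm_num [glueA12Coords, glueA12])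

theorem niemeierA12sq_eq_map : NiemeierA12sq = A12sqCoords.map liftA12 := by
  refine le_antisymm ((AddSubgroup.closure_le _).mpr ?_) (AddSubgroup.map_le_iff_le_comap.mpr ?_)
  · rintro x ((⟨hint, hsum, hz⟩ | ⟨hint, hsum, hz⟩) | rfl)
    · have h₂ : ∑ i : Fin 13, x (Fin.natAdd 13 i) = 0 := sum_eq_zero fun i _ => hz _ (by simp)
      exact mem_A12sqCoords_map_of_isIntVec hint (by linarith [sum_fin26 x]) h₂
    · have h₁ : ∑ i : Fin 13, x (Fin.castAdd 13 i) = 0 := sum_eq_zero fun i _ => hz _ (by simp)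
      exact mem_A12sqCoords_map_of_isIntVec hint h₁ (by linarith [sum_fin26 x])
    · exact ⟨glueA12Coords, glueA12Coords_mem, liftA12_glueA12Coords⟩
  · rintro ⟨k, f, g⟩ ⟨hf, hg⟩
    obtain ⟨hf₀, hg₀⟩ := glueA12Coords_mem
    set f' := f - k • glueA12Coords.2.1
    set g' := g - k • glueA12Coords.2.2
    have hdecomp : (k, f, g) = k • glueA12Coords + (0, f', 0) + (0, 0, g') := by
      ext <;> simp [f', g', show glueA12Coords.1 = 1 from rfl]
    have hf' : ∑ i, f' i = 0 := by
      simp only [f', Pi.sub_apply, Pi.smul_apply, smul_eq_mul, sum_sub_distrib, ← mul_sum, hf, hf₀]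
      simp [glueA12Coords]
    have hg' : ∑ i, g' i = 0 := by
      simp only [g', Pi.sub_apply, Pi.smul_apply, smul_eq_mul, sum_sub_distrib, ← mul_sum, hg, hg₀]
      simp [glueA12Coords]; ring
    have hglue : glueA12 ∈ NiemeierA12sq :=
      AddSubgroup.subset_closure (Set.mem_union_right _ rfl)
    have ha : liftA12 (0, f', 0) ∈ NiemeierA12sq := AddSubgroup.subset_closure
      (Set.mem_union_left _ (Set.mem_union_left _ (liftA12_mem_A12a hf')))
    have hb : liftA12 (0, 0, g') ∈ NiemeierA12sq := AddSubgroup.subset_closure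
      (Set.mem_union_left _ (Set.mem_union_right _ (liftA12_mem_A12b hg')))
    rw [AddSubgroup.mem_comap, hdecomp, map_add, map_add, map_zsmul, liftA12_glueA12Coords]
    exact add_mem (add_mem (zsmul_mem hglue k) ha) hb

lemma qip_liftA12 {p : ℤ × (Fin 13 → ℤ) × (Fin 13 → ℤ)} (hp : p ∈ A12sqCoords) :
    qip (liftA12 p) (liftA12 p) = ∑ i, p.2.1 i ^ 2 + ∑ i, p.2.2 i ^ 2 - 2 * p.1 ^ 2 := by
  obtain ⟨k, f, g⟩ := p
  obtain ⟨hf, hg⟩ := hp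
  have hfq : ∑ i, (f i : ℚ) = -k := by exact_mod_cast hf
  have hgq : ∑ i, (g i : ℚ) = -(5 * k) := by exact_mod_cast hg
  simp only [qip, sum_fin26, liftA12_castAdd, liftA12_natAdd, ← sq, add_sq, sum_add_distrib,
    ← sum_mul, ← mul_sum, sum_const, card_univ, Fintype.card_fin, hfq, hgq]
  push_cast
  ring

lemma exists_glueClass_lt_thirteen {p : ℤ × (Fin 13 → ℤ) × (Fin 13 → ℤ)} (hp : p ∈ A12sqCoords) :
    ∃ n : ℕ, n < 13 ∧ ∃ f g,
      ((n : ℤ), f, g) ∈ A12sqCoords ∧ liftA12 ((n : ℤ), f, g) = liftA12 p := by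
  obtain ⟨k, f, g⟩ := p
  obtain ⟨hf, hg⟩ := hp
  obtain ⟨n, q, hn, rfl⟩ : ∃ n : ℕ, ∃ q, n < 13 ∧ k = n + 13 * q :=
    ⟨(k % 13).toNat, k / 13, by omega, by omega⟩
  refine ⟨n, hn, f + fun _ => q, g + fun _ => 5 * q, ⟨?_, ?_⟩, ?_⟩
  · simp [sum_add_distrib, hf]
  · simp [sum_add_distrib, hg]; ring
  · refine fin26_funext (fun i => ?_) (fun i => ?_) <;>
      simp only [liftA12_castAdd, liftA12_natAdd, Pi.add_apply] <;> push_cast <;> ring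

lemma liftA12_injOn : Set.InjOn liftA12 {p | 0 ≤ p.1 ∧ p.1 < 13} := by
  rintro ⟨k, f, g⟩ ⟨hk₀, hk⟩ ⟨k', f', g'⟩ ⟨hk₀', hk'⟩ h
  have hf (i : Fin 13) := congrFun h (Fin.castAdd 13 i)
  have hg (i : Fin 13) := congrFun h (Fin.natAdd 13 i)
  simp only [liftA12_castAdd, liftA12_natAdd] at hf hg
  obtain rfl : k = k' := by
    have h₀ : ((13 * (f 0 - f' 0) : ℤ) : ℚ) = k' - k := by push_cast; linarith [hf 0]
    have : 13 * (f 0 - f' 0) = k' - k := by exact_mod_cast h₀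
    omega
  have hff : f = f' := funext fun i => by exact_mod_cast (by linarith [hf i] : (f i : ℚ) = f' i)
  have hgg : g = g' := funext fun i => by exact_mod_cast (by linarith [hg i] : (g i : ℚ) = g' i)
  rw [hff, hgg]

def glueClassNorm4 (k : ℕ) : Set ((Fin 13 → ℤ) × (Fin 13 → ℤ)) :=
  {p | ∑ i, p.1 i = -k ∧ ∑ i, p.2 i = -(5 * k) ∧ ∑ i, p.1 i ^ 2 + ∑ i, p.2 i ^ 2 = 4 + 2 * k ^ 2}

lemma glueClassNorm4_finite (k : ℕ) : (glueClassNorm4 k).Finite := by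
  refine ((finite_setOf_sum_sq_le (4 + 2 * k ^ 2)).prod
    (finite_setOf_sum_sq_le (4 + 2 * k ^ 2))).subset fun p ⟨_, _, hp⟩ => ⟨?_, ?_⟩
  · have := sum_nonneg fun i (_ : i ∈ univ) => sq_nonneg (p.2 i)
    show ∑ i, p.1 i ^ 2 ≤ _
    linarith
  · have := sum_nonneg fun i (_ : i ∈ univ) => sq_nonneg (p.1 i)
    show ∑ i, p.2 i ^ 2 ≤ _
    linarith

lemma mem_niemeierA12sq_norm4_iff (u : Fin 26 → ℚ) :
    u ∈ NiemeierA12sq ∧ qip u u = 4 ↔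
      ∃ k : Fin 13, ∃ p ∈ glueClassNorm4 k, liftA12 ((k : ℤ), p) = u := by
  rw [niemeierA12sq_eq_map]
  constructor
  · rintro ⟨⟨p, hp, rfl⟩, hnorm⟩
    obtain ⟨n, hn, f, g, hp', heq⟩ := exists_glueClass_lt_thirteen hp
    rw [← heq, qip_liftA12 hp'] at hnorm
    refine ⟨⟨n, hn⟩, (f, g), ⟨hp'.1, hp'.2, ?_⟩, heq⟩
    have : ((∑ i, f i ^ 2 + ∑ i, g i ^ 2 : ℤ) : ℚ) = ((4 + 2 * n ^ 2 : ℤ) : ℚ) := by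
      push_cast at hnorm ⊢; linarith
    exact_mod_cast this
  · rintro ⟨k, p, ⟨hf, hg, hnorm⟩, rfl⟩
    refine ⟨⟨_, ⟨hf, hg⟩, rfl⟩, ?_⟩
    have : ((∑ i, p.1 i ^ 2 + ∑ i, p.2 i ^ 2 : ℤ) : ℚ) = ((4 + 2 * k ^ 2 : ℤ) : ℚ) := by
      exact_mod_cast hnorm
    rw [qip_liftA12 ⟨hf, hg⟩]
    push_cast at this ⊢
    linarith

lemma card_niemeierA12sq_norm4 :
    Nat.card {u | u ∈ NiemeierA12sq ∧ qip u u = 4} = ∑ k : Fin 13, (glueClassNorm4 k).ncard := by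
  have := fun k => (glueClassNorm4_finite k).to_subtype
  let e : (Σ k : Fin 13, glueClassNorm4 k) → {u | u ∈ NiemeierA12sq ∧ qip u u = 4} :=
    fun x => ⟨liftA12 ((x.1 : ℤ), x.2.1),
      (mem_niemeierA12sq_norm4_iff _).mpr ⟨x.1, x.2.1, x.2.2, rfl⟩⟩
  have he : Function.Bijective e := by
    refine ⟨fun x y h => ?_, fun ⟨u, hu⟩ => ?_⟩
    · obtain ⟨k, p, hp⟩ := x
      obtain ⟨k', p', hp'⟩ := y
      have hk := liftA12_injOn (x₁ := ((k : ℤ), p)) (x₂ := ((k' : ℤ), p')) ⟨by positivity, by omega⟩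
        ⟨by positivity, by omega⟩ (congrArg Subtype.val h)
      simp only [Prod.mk.injEq, Nat.cast_inj] at hk
      obtain ⟨hk, rfl⟩ := hk
      obtain rfl := Fin.ext hk
      rfl
    · obtain ⟨k, p, hp, rfl⟩ := (mem_niemeierA12sq_norm4_iff u).mp hu
      exact ⟨⟨k, p, hp⟩, rfl⟩
  rw [← Nat.card_congr (Equiv.ofBijective e he), Nat.card_sigma]
  simp only [Nat.card_coe_set_eq]

/-- The least norm of a vector in glue class `k` is `glueClassMin k - 2 k²`. -/
def glueClassMin (k : ℕ) : ℕ :=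
  sumSqMin 13 k + sumSqMin 13 (5 * k)

lemma four_add_two_mul_sq_le_glueClassMin {k : ℕ} (h₀ : 0 < k) (h₁₃ : k < 13) :
    4 + 2 * k ^ 2 ≤ glueClassMin k := by
  interval_cases k <;> decide

lemma sumSqMin_le_of_mem_glueClassNorm4 {k : ℕ} {p : (Fin 13 → ℤ) × (Fin 13 → ℤ)}
    (hp : p ∈ glueClassNorm4 k) :
    (sumSqMin 13 k : ℤ) ≤ ∑ i, p.1 i ^ 2 ∧ (sumSqMin 13 (5 * k) : ℤ) ≤ ∑ i, p.2 i ^ 2 :=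
  ⟨by simpa using sumSqMin_le_sum_sq p.1 hp.1,
    by simpa using sumSqMin_le_sum_sq p.2 (s := 5 * k) (by push_cast; exact hp.2.1)⟩

lemma glueClassNorm4_eq_prod {k : ℕ} (hk : glueClassMin k = 4 + 2 * k ^ 2) :
    glueClassNorm4 k =
      sumSqFiber (Fin 13) (-k) (sumSqMin 13 k) ×ˢ
        sumSqFiber (Fin 13) (-(5 * k : ℕ)) (sumSqMin 13 (5 * k)) := by
  have hk' : (sumSqMin 13 k + sumSqMin 13 (5 * k) : ℤ) = 4 + 2 * k ^ 2 := by exact_mod_cast hk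
  ext p
  constructor
  · intro hp
    obtain ⟨h₁, h₂⟩ := sumSqMin_le_of_mem_glueClassNorm4 hp
    obtain ⟨hf, hg, hn⟩ := hp
    exact ⟨⟨hf, by linarith⟩, by push_cast; exact hg, by linarith⟩
  · rintro ⟨⟨hf, hf₂⟩, hg, hg₂⟩
    exact ⟨hf, by exact_mod_cast hg, by rw [hf₂, hg₂, hk']⟩

lemma glueClassNorm4_eq_empty {k : ℕ} (hk : 4 + 2 * k ^ 2 < glueClassMin k) :
    glueClassNorm4 k = ∅ := by
  have hk' : (4 + 2 * k ^ 2 : ℤ) < sumSqMin 13 k + sumSqMin 13 (5 * k) := by exact_mod_cast hk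
  refine Set.eq_empty_of_forall_notMem fun p hp => ?_
  obtain ⟨h₁, h₂⟩ := sumSqMin_le_of_mem_glueClassNorm4 hp
  linarith [hp.2.2]

lemma ncard_glueClassNorm4 {k : ℕ} (hk : 4 + 2 * k ^ 2 ≤ glueClassMin k) :
    (glueClassNorm4 k).ncard =
      if glueClassMin k = 4 + 2 * k ^ 2 then
        Nat.choose 13 (k % 13) * Nat.choose 13 (5 * k % 13) else 0 := by
  split_ifs with hM
  · have h₁ := ncard_sumSqFiber_sumSqMin (ι := Fin 13) k
    have h₂ := ncard_sumSqFiber_sumSqMin (ι := Fin 13) (5 * k)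
    rw [Fintype.card_fin] at h₁ h₂
    rw [glueClassNorm4_eq_prod hM, Set.ncard_prod, h₁, h₂]
  · rw [glueClassNorm4_eq_empty (lt_of_le_of_ne hk (Ne.symm hM)), Set.ncard_empty]

lemma glueClassNorm4_zero :
    glueClassNorm4 0 =
      sumSqFiber (Fin 13) 0 0 ×ˢ sumSqFiber (Fin 13) 0 4 ∪
      sumSqFiber (Fin 13) 0 2 ×ˢ sumSqFiber (Fin 13) 0 2 ∪
      sumSqFiber (Fin 13) 0 4 ×ˢ sumSqFiber (Fin 13) 0 0 := by
  ext ⟨f, g⟩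
  have hf := Int.even_iff.mp (even_sum_sq_sub_sum f)
  have hg := Int.even_iff.mp (even_sum_sq_sub_sum g)
  have hf₀ := sum_nonneg fun i (_ : i ∈ univ) => sq_nonneg (f i)
  have hg₀ := sum_nonneg fun i (_ : i ∈ univ) => sq_nonneg (g i)
  simp only [glueClassNorm4, sumSqFiber, Set.mem_union, Set.mem_prod, Set.mem_ofPred_eq]
  constructor <;> intro h <;> omega

lemma ncard_glueClassNorm4_zero :
    (glueClassNorm4 0).ncard =
      2 * (Nat.choose 13 4 * Nat.choose 4 2) + (Nat.choose 13 2 * Nat.choose 2 1) ^ 2 := by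
  have hdisj {m m' : ℤ} (h : m ≠ m') :
      Disjoint (sumSqFiber (Fin 13) 0 m) (sumSqFiber (Fin 13) 0 m') :=
    Set.disjoint_left.mpr fun _ h₁ h₂ => h (h₁.2.symm.trans h₂.2)
  have hfin (m m' : ℤ) :=
    (sumSqFiber_finite (ι := Fin 13) 0 m).prod (sumSqFiber_finite (ι := Fin 13) 0 m')
  rw [glueClassNorm4_zero, Set.ncard_union_eq _ ((hfin _ _).union (hfin _ _)) (hfin _ _),
    Set.ncard_union_eq _ (hfin _ _) (hfin _ _), Set.ncard_prod, Set.ncard_prod, Set.ncard_prod,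
    ncard_sumSqFiber_zero (c := 0) (m := 0) (by norm_num) (by norm_num),
    ncard_sumSqFiber_zero (c := 1) (m := 2) (by norm_num) (by norm_num),
    ncard_sumSqFiber_zero (c := 2) (m := 4) (by norm_num) (by norm_num), Fintype.card_fin]
  · simp; ring
  · exact Set.disjoint_prod.mpr (Or.inl (hdisj (by norm_num)))
  · exact Set.disjoint_union_left.mpr ⟨Set.disjoint_prod.mpr (Or.inl (hdisj (by norm_num))),
      Set.disjoint_prod.mpr (Or.inl (hdisj (by norm_num)))⟩

/-- The number of norm-4 vectors in the Niemeier lattice `A_12²` is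
`C(13,4)·C(4,2) + C(13,4)·C(4,2) + 4·C(13,2)² + 2·13·C(13,5) + 2·C(13,2)·C(13,3)
 + 2·C(13,2)·C(13,3) + 2·13·C(13,5) = 189072`. -/
theorem niemeierA12sq_norm4_count :
    Nat.choose 13 4 * Nat.choose 4 2 + Nat.choose 13 4 * Nat.choose 4 2 +
      4 * Nat.choose 13 2 ^ 2 + 2 * 13 * Nat.choose 13 5 +
      2 * Nat.choose 13 2 * Nat.choose 13 3 +
      2 * Nat.choose 13 2 * Nat.choose 13 3 + 2 * 13 * Nat.choose 13 5
      = 189072 ∧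
    Nat.card {u : Fin 26 → ℚ | u ∈ NiemeierA12sq ∧ qip u u = 4} = 189072 := by
  refine ⟨by decide, ?_⟩
  rw [card_niemeierA12sq_norm4, Fin.sum_univ_succ, Fin.val_zero, ncard_glueClassNorm4_zero,
    sum_congr rfl fun k _ => ncard_glueClassNorm4
      (four_add_two_mul_sq_le_glueClassMin k.succ_pos k.succ.isLt)]
  decide
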